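/- arXiv:1808.01806 — 5 statements merged into one kernel-verified Lean document; each statement's English description precedes it below -/
import Mathlib

section
/- Under the abstract variational framework, let γ₁, γ₂ : X → ℝ be bounded measurable functions, let ℓ_g, ℓ_h : V → ℝ be linear functionals, let u₁ ∈ V be a weak solution for (γ₁, ℓ_h) and u₂ ∈ V a weak solution for (γ₂, ℓ_g). Then the Alessandrini-type identity holds: ℓ_h(u₂) − ℓ_g(u₁) = ∫_X (γ₁ − γ₂)·(Tu₁)·(Tu₂) dμ. (This is the identity ∫_{∂Ω} h (Λ(γ₂) − Λ(γ₁)) g ds = ∫_Γ (γ₁ − γ₂) u₁ʰ u₂ᵍ ds from the proof of the uniqueness theorem.) -/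
open MeasureTheory

namespace MeasureTheory

variable {X : Type*} [MeasurableSpace X] {μ : Measure X}

theorem Integrable.mul_of_measurable_of_abs_le {γ f : X → ℝ} (hf : Integrable f μ)
    (hγ : Measurable γ) (hγb : ∃ C, ∀ x, |γ x| ≤ C) :
    Integrable (fun x => γ x * f x) μ :=
  let ⟨_, hC⟩ := hγb
  hf.bdd_mul hγ.aestronglyMeasurable (.of_forall hC)

theorem integral_sub_mul_mul {γ₁ γ₂ f g : X → ℝ} (hfg : Integrable (fun x => f x * g x) μ)
    (hγ₁m : Measurable γ₁) (hγ₂m : Measurable γ₂)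
    (hγ₁b : ∃ C, ∀ x, |γ₁ x| ≤ C) (hγ₂b : ∃ C, ∀ x, |γ₂ x| ≤ C) :
    ∫ x, (γ₁ x - γ₂ x) * f x * g x ∂μ =
      ∫ x, γ₁ x * f x * g x ∂μ - ∫ x, γ₂ x * f x * g x ∂μ := by
  simp_rw [mul_assoc]
  rw [← integral_sub (hfg.mul_of_measurable_of_abs_le hγ₁m hγ₁b)
    (hfg.mul_of_measurable_of_abs_le hγ₂m hγ₂b)]
  simp_rw [sub_mul]

end MeasureTheory

theorem alessandrini_identity_general
    {V : Type*} [AddCommGroup V] [Module ℝ V]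
    {X : Type*} [MeasurableSpace X] {μ : Measure X}
    (a : V → V → ℝ)
    (ha_symm : ∀ v w, a v w = a w v)
    (T : V →ₗ[ℝ] (X → ℝ))
    (hT : ∀ v, MemLp (T v) 2 μ)
    (γ₁ γ₂ : X → ℝ)
    (hγ₁m : Measurable γ₁) (hγ₂m : Measurable γ₂)
    (hγ₁b : ∃ C, ∀ x, |γ₁ x| ≤ C) (hγ₂b : ∃ C, ∀ x, |γ₂ x| ≤ C)
    (ℓg ℓh : V →ₗ[ℝ] ℝ)
    (u₁ u₂ : V)
    (hu₁ : ∀ w, a u₁ w + ∫ x, γ₁ x * T u₁ x * T w x ∂μ = ℓh w)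
    (hu₂ : ∀ w, a u₂ w + ∫ x, γ₂ x * T u₂ x * T w x ∂μ = ℓg w) :
    ℓh u₂ - ℓg u₁ = ∫ x, (γ₁ x - γ₂ x) * T u₁ x * T u₂ x ∂μ := by
  -- Test each weak formulation with the other solution; the energy terms cancel by symmetry.
  calc ℓh u₂ - ℓg u₁
      = ∫ x, γ₁ x * T u₁ x * T u₂ x ∂μ - ∫ x, γ₂ x * T u₂ x * T u₁ x ∂μ := by
        rw [← hu₁ u₂, ← hu₂ u₁, ha_symm u₂ u₁]
        ring
    _ = ∫ x, γ₁ x * T u₁ x * T u₂ x ∂μ - ∫ x, γ₂ x * T u₁ x * T u₂ x ∂μ := by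
        simp_rw [mul_right_comm (γ₂ _) (T u₂ _)]
    _ = ∫ x, (γ₁ x - γ₂ x) * T u₁ x * T u₂ x ∂μ :=
        (integral_sub_mul_mul ((hT u₁).integrable_mul (hT u₂)) hγ₁m hγ₂m hγ₁b hγ₂b).symm

/-- Alessandrini-type identity (proof of Theorem 2.1):
`ℓ_h(u₂) − ℓ_g(u₁) = ∫_X (γ₁ − γ₂)·(Tu₁)·(Tu₂) dμ`. -/
theorem alessandrini_identity
    {V : Type*} [AddCommGroup V] [Module ℝ V]
    {X : Type*} [MeasurableSpace X] {μ : Measure X}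
    (a : V → V → ℝ)
    (ha_symm : ∀ v w, a v w = a w v)
    (ha_add : ∀ u v w, a (u + v) w = a u w + a v w)
    (ha_smul : ∀ (c : ℝ) (v w : V), a (c • v) w = c * a v w)
    (ha_nonneg : ∀ v, 0 ≤ a v v)
    (T : V →ₗ[ℝ] (X → ℝ))
    (hT : ∀ v, MemLp (T v) 2 μ)
    (γ₁ γ₂ : X → ℝ)
    (hγ₁m : Measurable γ₁) (hγ₂m : Measurable γ₂)
    (hγ₁b : ∃ C, ∀ x, |γ₁ x| ≤ C) (hγ₂b : ∃ C, ∀ x, |γ₂ x| ≤ C)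
    (ℓg ℓh : V →ₗ[ℝ] ℝ)
    (u₁ u₂ : V)
    (hu₁ : ∀ w, a u₁ w + ∫ x, γ₁ x * T u₁ x * T w x ∂μ = ℓh w)
    (hu₂ : ∀ w, a u₂ w + ∫ x, γ₂ x * T u₂ x * T w x ∂μ = ℓg w) :
    ℓh u₂ - ℓg u₁ = ∫ x, (γ₁ x - γ₂ x) * T u₁ x * T u₂ x ∂μ :=
  alessandrini_identity_general a ha_symm T hT γ₁ γ₂ hγ₁m hγ₂m hγ₁b hγ₂b ℓg ℓh u₁ u₂ hu₁ hu₂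
end

section
/- Under the abstract variational framework, let γ₁, γ₂ : X → ℝ be bounded measurable with γ₁ ≥ 0 μ-a.e., let ℓ : V → ℝ be a linear functional, and let u₁, u₂ ∈ V be weak solutions for (γ₁, ℓ) and (γ₂, ℓ) respectively. Then the energy identity holds: a(u₁ − u₂, u₁ − u₂) + ∫_X γ₁·(T(u₁ − u₂))² dμ = ℓ(u₁) − ℓ(u₂) + ∫_X (γ₁ − γ₂)·(Tu₂)² dμ. (This is the central identity in the proof of the monotonicity estimate, Lemma 4.1.) -/
/-! With `B₁(v, w) = a(v, w) + ∫ γ₁ (T v) (T w) dμ`, the weak formulation for `u₁` says `B₁ u₁ = ℓ`.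
Since `B₁` is symmetric, expanding gives `B₁(u₁ - u₂, u₁ - u₂) = ℓ u₁ - 2 ℓ u₂ + B₁(u₂, u₂)`, and
testing the equation for `u₂` against `u₂` itself trades one `ℓ u₂` for
`a(u₂, u₂) + ∫ γ₂ (T u₂)² dμ`. -/

open MeasureTheory
open LinearMap (BilinForm)

namespace LinearMap.BilinForm

variable {R M : Type*} [CommRing R] [AddCommGroup M] [Module R M]

def ofSymm (a : M → M → R) (hsymm : ∀ v w, a v w = a w v)
    (hadd : ∀ u v w, a (u + v) w = a u w + a v w) (hsmul : ∀ (c : R) v w, a (c • v) w = c * a v w) :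
    BilinForm R M :=
  mk₂ R a hadd hsmul (fun u v w => by rw [hsymm, hadd, hsymm v, hsymm w])
    (fun c v w => by rw [hsymm, hsmul, hsymm, smul_eq_mul])

theorem isSymm_ofSymm (a : M → M → R) (hsymm : ∀ v w, a v w = a w v)
    (hadd : ∀ u v w, a (u + v) w = a u w + a v w) (hsmul : ∀ (c : R) v w, a (c • v) w = c * a v w) :
    (ofSymm a hsymm hadd hsmul).IsSymm :=
  ⟨hsymm⟩

theorem IsSymm.apply_sub_sub_eq {B : BilinForm R M} (hB : B.IsSymm) {ℓ : M → R} {u₁ : M}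
    (hu₁ : ∀ w, B u₁ w = ℓ w) (u₂ : M) :
    B (u₁ - u₂) (u₁ - u₂) = ℓ u₁ - 2 * ℓ u₂ + B u₂ u₂ := by
  have h₁₂ : B u₂ u₁ = ℓ u₂ := by rw [hB.eq, hu₁]
  simp only [map_sub, LinearMap.sub_apply, hu₁, h₁₂]
  ring

end LinearMap.BilinForm

section WeightedTraceForm

variable {V X : Type*} [AddCommGroup V] [Module ℝ V] [MeasurableSpace X] {μ : Measure X}

theorem integrable_mul_mul_of_memLp_two {γ f g : X → ℝ} {C : ℝ} (hγ : AEStronglyMeasurable γ μ)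
    (hγC : ∀ᵐ x ∂μ, ‖γ x‖ ≤ C) (hf : MemLp f 2 μ) (hg : MemLp g 2 μ) :
    Integrable (fun x => γ x * f x * g x) μ := by
  simpa only [Pi.mul_apply, mul_assoc] using (hf.integrable_mul hg).bdd_mul hγ hγC

noncomputable def weightedTraceForm (T : V →ₗ[ℝ] X → ℝ) (γ : X → ℝ)
    (hint : ∀ v w, Integrable (fun x => γ x * T v x * T w x) μ) : BilinForm ℝ V :=
  LinearMap.mk₂ ℝ (fun v w => ∫ x, γ x * T v x * T w x ∂μ)
    (fun u v w => by
      simp only [map_add, Pi.add_apply, mul_add, add_mul]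
      exact integral_add (hint u w) (hint v w))
    (fun c v w => by
      simp only [map_smul, Pi.smul_apply, smul_eq_mul, ← integral_const_mul]
      congr 1 with x
      ring)
    (fun u v w => by
      simp only [map_add, Pi.add_apply, mul_add]
      exact integral_add (hint u v) (hint u w))
    (fun c v w => by
      simp only [map_smul, Pi.smul_apply, smul_eq_mul, ← integral_const_mul]
      congr 1 with x
      ring)

theorem weightedTraceForm_apply (T : V →ₗ[ℝ] X → ℝ) (γ : X → ℝ)
    (hint : ∀ v w, Integrable (fun x => γ x * T v x * T w x) μ) (v w : V) :
    weightedTraceForm T γ hint v w = ∫ x, γ x * T v x * T w x ∂μ :=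
  rfl

theorem isSymm_weightedTraceForm (T : V →ₗ[ℝ] X → ℝ) (γ : X → ℝ)
    (hint : ∀ v w, Integrable (fun x => γ x * T v x * T w x) μ) :
    (weightedTraceForm T γ hint).IsSymm :=
  ⟨fun v w => by
    simp only [weightedTraceForm_apply]
    congr 1 with x
    ring⟩

end WeightedTraceForm

theorem monotonicity_energy_identity_general
    {V : Type*} [AddCommGroup V] [Module ℝ V]
    {X : Type*} [MeasurableSpace X] {μ : Measure X}
    (a : V → V → ℝ)
    (ha_symm : ∀ v w, a v w = a w v)
    (ha_add : ∀ u v w, a (u + v) w = a u w + a v w)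
    (ha_smul : ∀ (c : ℝ) (v w : V), a (c • v) w = c * a v w)
    (T : V →ₗ[ℝ] (X → ℝ))
    (hT : ∀ v, MemLp (T v) 2 μ)
    (γ₁ γ₂ : X → ℝ)
    (hγ₁m : Measurable γ₁) (hγ₂m : Measurable γ₂)
    (hγ₁b : ∃ C, ∀ x, |γ₁ x| ≤ C) (hγ₂b : ∃ C, ∀ x, |γ₂ x| ≤ C)
    (ℓ : V →ₗ[ℝ] ℝ)
    (u₁ u₂ : V)
    (hu₁ : ∀ w, a u₁ w + ∫ x, γ₁ x * T u₁ x * T w x ∂μ = ℓ w)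
    (hu₂ : ∀ w, a u₂ w + ∫ x, γ₂ x * T u₂ x * T w x ∂μ = ℓ w) :
    a (u₁ - u₂) (u₁ - u₂) + ∫ x, γ₁ x * (T (u₁ - u₂) x) ^ 2 ∂μ =
      ℓ u₁ - ℓ u₂ + ∫ x, (γ₁ x - γ₂ x) * (T u₂ x) ^ 2 ∂μ := by
  have hint : ∀ γ : X → ℝ, Measurable γ → (∃ C, ∀ x, |γ x| ≤ C) → ∀ v w,
      Integrable (fun x => γ x * T v x * T w x) μ := fun γ hγ ⟨C, hC⟩ v w =>
    integrable_mul_mul_of_memLp_two hγ.aestronglyMeasurable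
      (.of_forall fun x => (Real.norm_eq_abs _).trans_le (hC x)) (hT v) (hT w)
  let B₁ : BilinForm ℝ V :=
    .ofSymm a ha_symm ha_add ha_smul + weightedTraceForm T γ₁ (hint γ₁ hγ₁m hγ₁b)
  have hB₁ : B₁.IsSymm := (BilinForm.isSymm_ofSymm ..).add (isSymm_weightedTraceForm ..)
  have henergy : B₁ (u₁ - u₂) (u₁ - u₂) = ℓ u₁ - 2 * ℓ u₂ + B₁ u₂ u₂ :=
    hB₁.apply_sub_sub_eq hu₁ u₂
  have hsplit : ∫ x, (γ₁ x - γ₂ x) * (T u₂ x) ^ 2 ∂μ =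
      (∫ x, γ₁ x * T u₂ x * T u₂ x ∂μ) - ∫ x, γ₂ x * T u₂ x * T u₂ x ∂μ := by
    rw [← integral_sub (hint γ₁ hγ₁m hγ₁b u₂ u₂) (hint γ₂ hγ₂m hγ₂b u₂ u₂)]
    congr 1 with x
    ring
  simp only [B₁, LinearMap.add_apply, BilinForm.ofSymm, LinearMap.mk₂_apply,
    weightedTraceForm_apply] at henergy
  rw [hsplit]
  simp only [sq, ← mul_assoc]
  linarith [hu₂ u₂]

/-- Energy identity from the proof of the monotonicity estimate (Lemma 4.1):
`a(u₁−u₂,u₁−u₂) + ∫_X γ₁ (T(u₁−u₂))² dμ = ℓ(u₁) − ℓ(u₂) + ∫_X (γ₁−γ₂)(Tu₂)² dμ`. -/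
theorem monotonicity_energy_identity
    {V : Type*} [AddCommGroup V] [Module ℝ V]
    {X : Type*} [MeasurableSpace X] {μ : Measure X}
    (a : V → V → ℝ)
    (ha_symm : ∀ v w, a v w = a w v)
    (ha_add : ∀ u v w, a (u + v) w = a u w + a v w)
    (ha_smul : ∀ (c : ℝ) (v w : V), a (c • v) w = c * a v w)
    (ha_nonneg : ∀ v, 0 ≤ a v v)
    (T : V →ₗ[ℝ] (X → ℝ))
    (hT : ∀ v, MemLp (T v) 2 μ)
    (γ₁ γ₂ : X → ℝ)
    (hγ₁m : Measurable γ₁) (hγ₂m : Measurable γ₂)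
    (hγ₁b : ∃ C, ∀ x, |γ₁ x| ≤ C) (hγ₂b : ∃ C, ∀ x, |γ₂ x| ≤ C)
    (hγ₁0 : ∀ᵐ x ∂μ, 0 ≤ γ₁ x)
    (ℓ : V →ₗ[ℝ] ℝ)
    (u₁ u₂ : V)
    (hu₁ : ∀ w, a u₁ w + ∫ x, γ₁ x * T u₁ x * T w x ∂μ = ℓ w)
    (hu₂ : ∀ w, a u₂ w + ∫ x, γ₂ x * T u₂ x * T w x ∂μ = ℓ w) :
    a (u₁ - u₂) (u₁ - u₂) + ∫ x, γ₁ x * (T (u₁ - u₂) x) ^ 2 ∂μ =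
      ℓ u₁ - ℓ u₂ + ∫ x, (γ₁ x - γ₂ x) * (T u₂ x) ^ 2 ∂μ :=
  monotonicity_energy_identity_general a ha_symm ha_add ha_smul T hT γ₁ γ₂ hγ₁m hγ₂m hγ₁b hγ₂b ℓ u₁
    u₂ hu₁ hu₂
end

section
/- Under the abstract variational framework, let γ₁, γ₂ : X → ℝ be bounded measurable with γ₁ ≥ c₁ μ-a.e. for some constant c₁ > 0 and γ₂ ≥ 0 μ-a.e., let ℓ : V → ℝ be a linear functional, and let u₁, u₂ ∈ V be weak solutions for (γ₁, ℓ) and (γ₂, ℓ) respectively. Then ℓ(u₂) − ℓ(u₁) ≥ ∫_X (γ₂ − γ₂²/γ₁)·(Tu₂)² dμ. (This is the second inequality of the monotonicity estimate, Lemma 4.1: ∫_{∂Ω} g (Λ(γ₂) − Λ(γ₁)) g ds ≥ ∫_Γ (γ₂ − γ₂²/γ₁) u₂² ds.) -/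
/-!
Testing the weak formulation of `u₂` against `u₂` and `u₁` and that of `u₁` against `u₁`, splitting
`ℓ(u₂) − ℓ(u₁) = ℓ(u₂) − 2ℓ(u₁) + ℓ(u₁)` and using the symmetry of `a` gives
`ℓ(u₂) − ℓ(u₁) = a(u₂ − u₁, u₂ − u₁) + ∫ (γ₂ (Tu₂)² − 2 γ₂ Tu₂ Tu₁ + γ₁ (Tu₁)²) dμ`.
The form term is nonnegative, and completing the square in `Tu₁` bounds the integrand below by
`(γ₂ − γ₂²/γ₁)(Tu₂)²` wherever `γ₁ > 0`.
-/

open MeasureTheory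

section Algebra

variable {V : Type*} [AddCommGroup V]

lemma apply_sub_left_of_add_left {a : V → V → ℝ} (ha_add : ∀ u v w, a (u + v) w = a u w + a v w)
    (v w z : V) : a (v - w) z = a v z - a w z := by
  rw [eq_sub_iff_add_eq, ← ha_add, sub_add_cancel]

lemma apply_sub_sub_of_symm_of_add_left {a : V → V → ℝ} (ha_symm : ∀ v w, a v w = a w v)
    (ha_add : ∀ u v w, a (u + v) w = a u w + a v w) (v w : V) :
    a (v - w) (v - w) = a v v - 2 * a v w + a w w := by
  simp only [apply_sub_left_of_add_left ha_add, ha_symm _ (v - w)]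
  rw [ha_symm w v]
  ring

lemma sub_sq_div_mul_sq_le {g₁ g₂ : ℝ} (hg₁ : 0 < g₁) (t s : ℝ) :
    (g₂ - g₂ ^ 2 / g₁) * t ^ 2 ≤ g₂ * t * t - 2 * (g₂ * t * s) + g₁ * s * s := by
  have hsq : g₂ * t * t - 2 * (g₂ * t * s) + g₁ * s * s - (g₂ - g₂ ^ 2 / g₁) * t ^ 2
      = (g₁ * s - g₂ * t) ^ 2 / g₁ := by
    field_simp
    ring
  have : 0 ≤ (g₁ * s - g₂ * t) ^ 2 / g₁ := by positivity
  linarith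

end Algebra

section Integrability

variable {X : Type*} [MeasurableSpace X] {μ : Measure X}

lemma MemLp.integrable_bdd_mul_mul {w f g : X → ℝ} {C : ℝ} (hw : AEStronglyMeasurable w μ)
    (hC : ∀ᵐ x ∂μ, ‖w x‖ ≤ C) (hf : MemLp f 2 μ) (hg : MemLp g 2 μ) :
    Integrable (fun x => w x * (f x * g x)) μ :=
  (hf.integrable_mul hg).bdd_mul hw hC

lemma ae_norm_sub_sq_div_le {γ₁ γ₂ : X → ℝ} {c₁ C : ℝ} (hc₁ : 0 < c₁)
    (hγ₁ : ∀ᵐ x ∂μ, c₁ ≤ γ₁ x) (hγ₂ : ∀ x, |γ₂ x| ≤ C) :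
    ∀ᵐ x ∂μ, ‖γ₂ x - γ₂ x ^ 2 / γ₁ x‖ ≤ C + C ^ 2 / c₁ := by
  filter_upwards [hγ₁] with x hx
  have hsq : γ₂ x ^ 2 ≤ C ^ 2 := by
    simpa only [sq_abs] using pow_le_pow_left₀ (abs_nonneg _) (hγ₂ x) 2
  have hdiv : |γ₂ x ^ 2 / γ₁ x| ≤ C ^ 2 / c₁ := by
    rw [abs_of_nonneg (div_nonneg (sq_nonneg _) (hc₁.trans_le hx).le)]
    exact div_le_div₀ (sq_nonneg _ |>.trans hsq) hsq hc₁ hx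
  exact (abs_sub _ _).trans (add_le_add (hγ₂ x) hdiv)

end Integrability

section WeakSolution

variable {V : Type*} [AddCommGroup V] [Module ℝ V] {X : Type*} [MeasurableSpace X]
  {μ : Measure X}

def IsWeakSolution (a : V → V → ℝ) (T : V →ₗ[ℝ] (X → ℝ)) (μ : Measure X) (γ : X → ℝ)
    (ℓ : V →ₗ[ℝ] ℝ) (u : V) : Prop :=
  ∀ w, a u w + ∫ x, γ x * T u x * T w x ∂μ = ℓ w

lemma IsWeakSolution.sub_eq {a : V → V → ℝ} (ha_symm : ∀ v w, a v w = a w v)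
    (ha_add : ∀ u v w, a (u + v) w = a u w + a v w) {T : V →ₗ[ℝ] (X → ℝ)} {γ₁ γ₂ : X → ℝ}
    {ℓ : V →ₗ[ℝ] ℝ} {u₁ u₂ : V} (hu₁ : IsWeakSolution a T μ γ₁ ℓ u₁)
    (hu₂ : IsWeakSolution a T μ γ₂ ℓ u₂)
    (h₁₁ : Integrable (fun x => γ₁ x * T u₁ x * T u₁ x) μ)
    (h₂₁ : Integrable (fun x => γ₂ x * T u₂ x * T u₁ x) μ)
    (h₂₂ : Integrable (fun x => γ₂ x * T u₂ x * T u₂ x) μ) :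
    ℓ u₂ - ℓ u₁ = a (u₂ - u₁) (u₂ - u₁) +
      ∫ x, (γ₂ x * T u₂ x * T u₂ x - 2 * (γ₂ x * T u₂ x * T u₁ x) + γ₁ x * T u₁ x * T u₁ x) ∂μ := by
  rw [integral_add (by exact h₂₂.sub (h₂₁.const_mul 2)) h₁₁,
    integral_sub h₂₂ (by exact h₂₁.const_mul 2),
    integral_const_mul, apply_sub_sub_of_symm_of_add_left ha_symm ha_add]
  linear_combination 2 * hu₂ u₁ - hu₁ u₁ - hu₂ u₂

end WeakSolution

theorem monotonicity_estimate_second_general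
    {V : Type*} [AddCommGroup V] [Module ℝ V]
    {X : Type*} [MeasurableSpace X] {μ : Measure X}
    (a : V → V → ℝ)
    (ha_symm : ∀ v w, a v w = a w v)
    (ha_add : ∀ u v w, a (u + v) w = a u w + a v w)
    (ha_nonneg : ∀ v, 0 ≤ a v v)
    (T : V →ₗ[ℝ] (X → ℝ))
    (hT : ∀ v, MemLp (T v) 2 μ)
    (γ₁ γ₂ : X → ℝ)
    (hγ₁m : Measurable γ₁) (hγ₂m : Measurable γ₂)
    (hγ₁b : ∃ C, ∀ x, |γ₁ x| ≤ C) (hγ₂b : ∃ C, ∀ x, |γ₂ x| ≤ C)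
    (c₁ : ℝ) (hc₁ : 0 < c₁)
    (hγ₁lb : ∀ᵐ x ∂μ, c₁ ≤ γ₁ x)
    (ℓ : V →ₗ[ℝ] ℝ)
    (u₁ u₂ : V)
    (hu₁ : ∀ w, a u₁ w + ∫ x, γ₁ x * T u₁ x * T w x ∂μ = ℓ w)
    (hu₂ : ∀ w, a u₂ w + ∫ x, γ₂ x * T u₂ x * T w x ∂μ = ℓ w) :
    ℓ u₂ - ℓ u₁ ≥ ∫ x, (γ₂ x - (γ₂ x) ^ 2 / γ₁ x) * (T u₂ x) ^ 2 ∂μ := by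
  obtain ⟨C₁, hC₁⟩ := hγ₁b
  obtain ⟨C₂, hC₂⟩ := hγ₂b
  have hint : ∀ {γ : X → ℝ} {C : ℝ}, Measurable γ → (∀ x, |γ x| ≤ C) →
      ∀ v w, Integrable (fun x => γ x * T v x * T w x) μ := fun hγ hC v w => by
    simpa only [mul_assoc] using MemLp.integrable_bdd_mul_mul hγ.aestronglyMeasurable
      (ae_of_all μ hC) (hT v) (hT w)
  have hlhs : Integrable (fun x => (γ₂ x - γ₂ x ^ 2 / γ₁ x) * T u₂ x ^ 2) μ := by
    simpa only [sq] using MemLp.integrable_bdd_mul_mul (w := fun x => γ₂ x - γ₂ x ^ 2 / γ₁ x)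
      (hγ₂m.sub ((hγ₂m.pow_const 2).div hγ₁m)).aestronglyMeasurable
      (ae_norm_sub_sq_div_le hc₁ hγ₁lb hC₂) (hT u₂) (hT u₂)
  have hle : ∫ x, (γ₂ x - γ₂ x ^ 2 / γ₁ x) * T u₂ x ^ 2 ∂μ ≤ ∫ x, (γ₂ x * T u₂ x * T u₂ x
      - 2 * (γ₂ x * T u₂ x * T u₁ x) + γ₁ x * T u₁ x * T u₁ x) ∂μ := integral_mono_ae hlhs
    (((hint hγ₂m hC₂ u₂ u₂).sub ((hint hγ₂m hC₂ u₂ u₁).const_mul 2)).add (hint hγ₁m hC₁ u₁ u₁))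
    (hγ₁lb.mono fun x hx => sub_sq_div_mul_sq_le (hc₁.trans_le hx) (T u₂ x) (T u₁ x))
  rw [IsWeakSolution.sub_eq ha_symm ha_add hu₁ hu₂ (hint hγ₁m hC₁ u₁ u₁)
    (hint hγ₂m hC₂ u₂ u₁) (hint hγ₂m hC₂ u₂ u₂)]
  linarith [ha_nonneg (u₂ - u₁)]

/-- Second inequality of the monotonicity estimate (Lemma 4.1):
`ℓ(u₂) − ℓ(u₁) ≥ ∫_X (γ₂ − γ₂²/γ₁)(Tu₂)² dμ`. -/
theorem monotonicity_estimate_second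
    {V : Type*} [AddCommGroup V] [Module ℝ V]
    {X : Type*} [MeasurableSpace X] {μ : Measure X}
    (a : V → V → ℝ)
    (ha_symm : ∀ v w, a v w = a w v)
    (ha_add : ∀ u v w, a (u + v) w = a u w + a v w)
    (ha_smul : ∀ (c : ℝ) (v w : V), a (c • v) w = c * a v w)
    (ha_nonneg : ∀ v, 0 ≤ a v v)
    (T : V →ₗ[ℝ] (X → ℝ))
    (hT : ∀ v, MemLp (T v) 2 μ)
    (γ₁ γ₂ : X → ℝ)
    (hγ₁m : Measurable γ₁) (hγ₂m : Measurable γ₂)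
    (hγ₁b : ∃ C, ∀ x, |γ₁ x| ≤ C) (hγ₂b : ∃ C, ∀ x, |γ₂ x| ≤ C)
    (c₁ : ℝ) (hc₁ : 0 < c₁)
    (hγ₁lb : ∀ᵐ x ∂μ, c₁ ≤ γ₁ x)
    (hγ₂0 : ∀ᵐ x ∂μ, 0 ≤ γ₂ x)
    (ℓ : V →ₗ[ℝ] ℝ)
    (u₁ u₂ : V)
    (hu₁ : ∀ w, a u₁ w + ∫ x, γ₁ x * T u₁ x * T w x ∂μ = ℓ w)
    (hu₂ : ∀ w, a u₂ w + ∫ x, γ₂ x * T u₂ x * T w x ∂μ = ℓ w) :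
    ℓ u₂ - ℓ u₁ ≥ ∫ x, (γ₂ x - (γ₂ x) ^ 2 / γ₁ x) * (T u₂ x) ^ 2 ∂μ :=
  monotonicity_estimate_second_general a ha_symm ha_add ha_nonneg T hT γ₁ γ₂ hγ₁m hγ₂m hγ₁b hγ₂b c₁
    hc₁ hγ₁lb ℓ u₁ u₂ hu₁ hu₂
end

section
/- Let (X, μ) be a measure space and M ⊆ X a measurable set with 0 < μ(M) < ∞. Let (f_n)_{n∈ℕ} be a sequence in L²(μ) converging in the L²(μ)-norm to the function μ(M)^{-1}·χ_M (the normalized indicator of M), and assume ∫_{X∖M}ف_n² dμ > 0 for every n. Define g_n := f_n / (∫_{X∖M} f_n² dμ)^{1/4}. Then ∫_M g_n² dμ → ∞ and ∫_{X∖M} g_n² dμ → 0 as n → ∞. (This is the rescaling construction proving the localized potentials result, Lemma 4.3, from the Runge approximation property, Theorem 3.1.) -/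
/-!
Convergence in `L²(μ)` gives convergence of `∫_S f² dμ` for every set `S`, since this is the
squared `L²` norm of the restriction. Hence `c_n := ∫_{X∖M} f_n² → 0` and
`∫_M f_n² → ∫_M μ(M)⁻² = μ(M)⁻¹ > 0`. Dividing `f_n` by `c_n^{1/4}` divides both integrals by
`√c_n`, so that `∫_M g_n² ≈ μ(M)⁻¹ / √c_n → ∞` while `∫_{X∖M} g_n² = √c_n → 0`.
-/

open MeasureTheory Filter Topology

section

variable {X : Type*} [MeasurableSpace X] {μ : Measure X}

theorem MeasureTheory.MemLp.integral_sq_eq_norm_toLp_sq {f : X → ℝ} (hf : MemLp f 2 μ) :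
    ∫ x, f x ^ 2 ∂μ = ‖hf.toLp f‖ ^ 2 := by
  rw [← real_inner_self_eq_norm_sq, L2.inner_def]
  refine integral_congr_ae ?_
  filter_upwards [hf.coeFn_toLp] with x hx
  simp [hx, sq]

theorem tendsto_integral_sq_of_tendsto_eLpNorm_sub {ι : Type*} {l : Filter ι}
    {f : ι → X → ℝ} {h : X → ℝ} (hf : ∀ i, MemLp (f i) 2 μ) (hh : MemLp h 2 μ)
    (hfh : Tendsto (fun i => eLpNorm (f i - h) 2 μ) l (𝓝 0)) :
    Tendsto (fun i => ∫ x, f i x ^ 2 ∂μ) l (𝓝 (∫ x, h x ^ 2 ∂μ)) := by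
  simp only [fun i => (hf i).integral_sq_eq_norm_toLp_sq, hh.integral_sq_eq_norm_toLp_sq]
  exact ((Lp.tendsto_Lp_iff_tendsto_eLpNorm'' f hf h hh).2 hfh).norm.pow 2

theorem tendsto_setIntegral_sq_of_tendsto_eLpNorm_sub {ι : Type*} {l : Filter ι}
    {f : ι → X → ℝ} {h : X → ℝ} (hf : ∀ i, MemLp (f i) 2 μ) (hh : MemLp h 2 μ)
    (hfh : Tendsto (fun i => eLpNorm (f i - h) 2 μ) l (𝓝 0)) (S : Set X) :
    Tendsto (fun i => ∫ x in S, f i x ^ 2 ∂μ) l (𝓝 (∫ x in S, h x ^ 2 ∂μ)) :=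
  tendsto_integral_sq_of_tendsto_eLpNorm_sub (fun i => (hf i).restrict S) (hh.restrict S) <|
    tendsto_of_tendsto_of_tendsto_of_le_of_le tendsto_const_nhds hfh (fun _ => zero_le)
      fun _ => eLpNorm_restrict_le _ _ _ _

theorem setIntegral_indicator_const_sq {M : Set X} (hM : MeasurableSet M) (a : ℝ) :
    ∫ x in M, M.indicator (fun _ => a) x ^ 2 ∂μ = μ.real M * a ^ 2 := by
  rw [setIntegral_congr_fun hM fun x hx => by rw [Set.indicator_of_mem hx], setIntegral_const,
    smul_eq_mul]

theorem setIntegral_compl_indicator_const_sq (M : Set X) (a : ℝ) :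
    ∫ x in Mᶜ, M.indicator (fun _ => a) x ^ 2 ∂μ = 0 :=
  setIntegral_eq_zero_of_forall_eq_zero fun x hx => by
    rw [Set.indicator_of_notMem hx, zero_pow two_ne_zero]

theorem Real.rpow_one_div_four_sq {c : ℝ} (hc : 0 ≤ c) : (c ^ (1 / 4 : ℝ)) ^ 2 = √c := by
  rw [← Real.rpow_natCast, ← Real.rpow_mul hc, Real.sqrt_eq_rpow]
  norm_num

theorem setIntegral_div_rpow_one_div_four_sq (f : X → ℝ) {c : ℝ} (hc : 0 ≤ c) (S : Set X) :
    ∫ x in S, (f x / c ^ (1 / 4 : ℝ)) ^ 2 ∂μ = (∫ x in S, f x ^ 2 ∂μ) / √c := by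
  simp only [div_pow, Real.rpow_one_div_four_sq hc, integral_div]

theorem tendsto_div_sqrt_atTop {ι : Type*} {l : Filter ι} {c d : ι → ℝ} {L : ℝ} (hL : 0 < L)
    (hd : Tendsto d l (𝓝 L)) (hc_pos : ∀ i, 0 < c i) (hc : Tendsto c l (𝓝 0)) :
    Tendsto (fun i => d i / √(c i)) l atTop := by
  have hsqrt : Tendsto (fun i => √(c i)) l (𝓝[>] 0) := by
    refine tendsto_nhdsWithin_iff.2 ⟨?_, Eventually.of_forall fun i => Real.sqrt_pos.2 (hc_pos i)⟩
    simpa using hc.sqrt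
  simp only [div_eq_mul_inv]
  exact hd.pos_mul_atTop hL hsqrt.inv_tendsto_nhdsGT_zero

end

/-- Rescaling construction proving the localized potentials result (Lemma 4.3)
from the Runge approximation property (Theorem 3.1): if `f_n → μ(M)⁻¹·χ_M` in
`L²(μ)` and `g_n := f_n / (∫_{X∖M} f_n² dμ)^{1/4}`, then `∫_M g_n² dμ → ∞` and
`∫_{X∖M} g_n² dμ → 0`. -/
theorem localized_potentials_rescaling
    {X : Type*} [MeasurableSpace X] {μ : Measure X}
    (M : Set X) (hM : MeasurableSet M) (hM0 : 0 < μ M) (hMfin : μ M < ⊤)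
    (f : ℕ → X → ℝ) (hf : ∀ n, MemLp (f n) 2 μ)
    (hconv : Tendsto
      (fun n => eLpNorm (fun x => f n x - M.indicator (fun _ => (μ M).toReal⁻¹) x) 2 μ)
      atTop (nhds 0))
    (hpos : ∀ n, 0 < ∫ x in Mᶜ, (f n x) ^ 2 ∂μ)
    (g : ℕ → X → ℝ)
    (hg : ∀ n x, g n x = f n x / (∫ x in Mᶜ, (f n x) ^ 2 ∂μ) ^ ((1 : ℝ) / 4)) :
    Tendsto (fun n => ∫ x in M, (g n x) ^ 2 ∂μ) atTop atTop ∧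
      Tendsto (fun n => ∫ x in Mᶜ, (g n x) ^ 2 ∂μ) atTop (nhds 0) := by
  have hμM : 0 < μ.real M := ENNReal.toReal_pos hM0.ne' hMfin.ne
  have hlim := tendsto_setIntegral_sq_of_tendsto_eLpNorm_sub hf
    (memLp_indicator_const 2 hM (μ M).toReal⁻¹ (Or.inr hMfin.ne)) hconv
  have hout : Tendsto (fun n => ∫ x in Mᶜ, f n x ^ 2 ∂μ) atTop (𝓝 0) := by
    simpa only [setIntegral_compl_indicator_const_sq] using hlim Mᶜ
  have hin : Tendsto (fun n => ∫ x in M, f n x ^ 2 ∂μ) atTop (𝓝 (μ.real M)⁻¹) := by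
    convert hlim M using 2
    rw [setIntegral_indicator_const_sq hM, ← measureReal_def]
    field_simp
  simp only [hg, setIntegral_div_rpow_one_div_four_sq _ (hpos _).le, Real.div_sqrt]
  exact ⟨tendsto_div_sqrt_atTop (inv_pos.2 hμM) hin hpos hout, by simpa using hout.sqrt⟩
end

section
/- (Correa–Seeger min-sup differentiability theorem, Theorem 8.1.) Let X and Y be real Banach spaces, ε > 0, and G : [0,ε] × X × Y → ℝ. For t ∈ [0,ε] define g(t) = inf_{x∈X} sup_{y∈Y} G(t,x,y) and h(t) = sup_{y∈Y} inf_{x∈X} G(t,x,y) (in the extended reals), and the sets X(t) = {x ∈ X : sup_{y∈Y} G(t,x,y) = g(t)} and Y(t) = {y ∈ Y : inf_{x∈X} G(t,x,y) = h(t)}; when h(t) = g(t), the set of saddle points is S(t) = X(t) × Y(t). Assume: (H1) S(t) is nonempty for every t ∈ [0,ε] (in particular h(t) = g(t) is finite); (H2) the partial derivative ∂_t G(t,x,y) exists for all (t,x,y) ∈ [0,ε] × X × Y; (H3) for every sequence t_n → 0 in (0,ε] there exist a subsequence (t_{n_k}), an element x⁰ ∈ X(0), and elements x_{n_k} ∈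 X(t_{n_k}), such that for every y ∈ Y(0) one has ∂_t G(t, x_{n_k}, y) → ∂_t G(0, x⁰, y) in the joint limit t ↘ 0, k → ∞; (H4) for every sequence t_n → 0 in (0,ε] there exist a subsequence (t_{n_k}), an element y⁰ ∈ Y(0), and elements y_{n_k} ∈ Y(t_{n_k}), such that for every x ∈ X(0) one has ∂_t G(t, x, y_{n_k}) → ∂_t G(0, x, y⁰) in the joint limit t ↘ 0, k → ∞. Then there exists a saddle point (x⁰, y⁰) ∈ X(0) × Y(0) such that the one-sided derivative of g at t = 0 exists and equals ∂_t G(0, x⁰, y⁰). -/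
/-!
The difference quotient `(g t - g 0) / t` is squeezed between slopes of `G` along saddle points:
for `x ∈ X(0)`, `y ∈ Y(t)` one has `g t - g 0 ≤ G(t,x,y) - G(0,x,y)`, and for `y ∈ Y(0)`,
`x ∈ X(t)` the reverse inequality. By the mean value theorem and (H3), (H4), every sequence
`tₙ ↘ 0` has a subsequence along which the quotient converges to `∂ₜG(0,x,y)` for some pair
`(x,y)` that is a saddle point of `∂ₜG(0,·,·)` on `X(0) × Y(0)`. All saddle points of a function
share one value, so the limit does not depend on the sequence.
-/

open Set Filter Topology

theorem exists_mem_Ioo_sub_eq_mul_of_hasDerivWithinAt {f f' : ℝ → ℝ} {a b t : ℝ}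
    (hf : ∀ s ∈ Icc a b, HasDerivWithinAt f (f' s) (Icc a b) s) (ht : t ∈ Ioc a b) :
    ∃ τ ∈ Ioo a t, f t - f a = f' τ * (t - a) := by
  have hsub : Icc a t ⊆ Icc a b := Icc_subset_Icc_right ht.2
  obtain ⟨τ, hτ, hslope⟩ := exists_hasDerivAt_eq_slope f f' ht.1
    (fun s hs => (hf s (hsub hs)).continuousWithinAt.mono hsub)
    (fun s hs => (hf s ⟨hs.1.le, hs.2.le.trans ht.2⟩).hasDerivAt
      (Icc_mem_nhds hs.1 (hs.2.trans_le ht.2)))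
  exact ⟨τ, hτ, by rw [hslope, div_mul_cancel₀ _ (sub_ne_zero.2 ht.1.ne')]⟩

theorem tendsto_apply_seq_of_joint_limit {b : ℝ → ℕ → ℝ} {L : ℝ}
    (hb : ∀ η > (0 : ℝ), ∃ δ > (0 : ℝ), ∃ N : ℕ,
      ∀ (t : ℝ) (k : ℕ), 0 < t → t < δ → N < k → |b t k - L| < η)
    {τ : ℕ → ℝ} (hτ_pos : ∀ k, 0 < τ k) (hτ : Tendsto τ atTop (𝓝 0)) :
    Tendsto (fun k => b (τ k) k) atTop (𝓝 L) := by
  refine Metric.tendsto_nhds.2 fun η hη => ?_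
  obtain ⟨δ, hδ, N, hN⟩ := hb η hη
  filter_upwards [eventually_gt_atTop N, hτ.eventually (gt_mem_nhds hδ)] with k hk hτk
  rw [Real.dist_eq]
  exact hN _ _ (hτ_pos k) hτk hk

theorem tendsto_slope_of_joint_limit {f f' : ℕ → ℝ → ℝ} {ε L : ℝ}
    (hf : ∀ k, ∀ s ∈ Icc 0 ε, HasDerivWithinAt (f k) (f' k s) (Icc 0 ε) s)
    (hf' : ∀ η > (0 : ℝ), ∃ δ > (0 : ℝ), ∃ N : ℕ,
      ∀ (t : ℝ) (k : ℕ), 0 < t → t < δ → N < k → |f' k t - L| < η)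
    {u : ℕ → ℝ} (hu : ∀ k, u k ∈ Ioc 0 ε) (hu0 : Tendsto u atTop (𝓝 0)) :
    Tendsto (fun k => (f k (u k) - f k 0) / u k) atTop (𝓝 L) := by
  choose τ hτ hslope using fun k => exists_mem_Ioo_sub_eq_mul_of_hasDerivWithinAt (hf k) (hu k)
  have hτ0 : Tendsto τ atTop (𝓝 0) :=
    squeeze_zero (fun k => (hτ k).1.le) (fun k => (hτ k).2.le) hu0
  refine (tendsto_apply_seq_of_joint_limit (b := fun t k => f' k t) hf'
    (fun k => (hτ k).1) hτ0).congr fun k => ?_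
  rw [hslope, sub_zero, mul_div_cancel_right₀ _ (hu k).1.ne']

theorem sub_le_sub_of_iSup_eq_of_iInf_eq {α β : Type*} {F₀ F₁ : α → β → ℝ} {v₀ v₁ : ℝ}
    {x : α} {y : β} (hx : ⨆ y, (F₀ x y : EReal) = v₀) (hy : ⨅ x, (F₁ x y : EReal) = v₁) :
    v₁ - v₀ ≤ F₁ x y - F₀ x y := by
  have h₀ : F₀ x y ≤ v₀ := EReal.coe_le_coe_iff.1 (hx ▸ le_iSup (fun y => (F₀ x y : EReal)) y)
  have h₁ : v₁ ≤ F₁ x y := EReal.coe_le_coe_iff.1 (hy ▸ iInf_le (fun x => (F₁ x y : EReal)) x)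
  linarith

section Saddle

variable {α β γ : Type*}

theorem IsSaddlePointOn.apply_eq [PartialOrder γ] {a : α → β → γ} {s : Set α} {t : Set β}
    {x₀ x₁ : α} {y₀ y₁ : β} (hx₀ : x₀ ∈ s) (hy₀ : y₀ ∈ t) (hx₁ : x₁ ∈ s) (hy₁ : y₁ ∈ t)
    (h₀ : IsSaddlePointOn s t a x₀ y₀) (h₁ : IsSaddlePointOn s t a x₁ y₁) : a x₀ y₀ = a x₁ y₁ :=
  le_antisymm ((h₀ x₁ hx₁ y₀ hy₀).trans (h₁ x₁ hx₁ y₀ hy₀))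
    ((h₁ x₀ hx₀ y₁ hy₁).trans (h₀ x₀ hx₀ y₁ hy₁))

variable [LinearOrder γ] [TopologicalSpace γ] [OrderTopology γ]
  {E : Type*} [TopologicalSpace E] {S : Set E} {e : E}
  (q : E → γ) (a : α → β → γ) (s : Set α) (t : Set β)

theorem exists_subseq_tendsto_saddle_value
    (hU : ∀ u : ℕ → E, (∀ n, u n ∈ S) → Tendsto u atTop (𝓝 e) →
      ∃ φ : ℕ → ℕ, StrictMono φ ∧ ∃ y ∈ t, ∀ x ∈ s,
        ∃ b : ℕ → γ, (∀ k, q (u (φ k)) ≤ b k) ∧ Tendsto b atTop (𝓝 (a x y)))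
    (hL : ∀ u : ℕ → E, (∀ n, u n ∈ S) → Tendsto u atTop (𝓝 e) →
      ∃ φ : ℕ → ℕ, StrictMono φ ∧ ∃ x ∈ s, ∀ y ∈ t,
        ∃ b : ℕ → γ, (∀ k, b k ≤ q (u (φ k))) ∧ Tendsto b atTop (𝓝 (a x y)))
    {u : ℕ → E} (hu : ∀ n, u n ∈ S) (hu0 : Tendsto u atTop (𝓝 e)) :
    ∃ φ : ℕ → ℕ, ∃ x ∈ s, ∃ y ∈ t, IsSaddlePointOn s t a x y ∧
      Tendsto (fun k => q (u (φ k))) atTop (𝓝 (a x y)) := by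
  obtain ⟨φ, hφ, y, hy, hupper⟩ := hU u hu hu0
  obtain ⟨ψ, hψ, x, hx, hlower⟩ := hL (u ∘ φ) (fun n => hu _) (hu0.comp hφ.tendsto_atTop)
  have hsqueeze : ∀ x' ∈ s, ∀ y' ∈ t, ∃ ℓ b : ℕ → γ,
      Tendsto ℓ atTop (𝓝 (a x y')) ∧ Tendsto b atTop (𝓝 (a x' y)) ∧
        ∀ k, ℓ k ≤ q (u (φ (ψ k))) ∧ q (u (φ (ψ k))) ≤ b k := by
    intro x' hx' y' hy'
    obtain ⟨b, hqb, hb⟩ := hupper x' hx'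
    obtain ⟨ℓ, hℓq, hℓ⟩ := hlower y' hy'
    exact ⟨ℓ, b ∘ ψ, hℓ, hb.comp hψ.tendsto_atTop, fun k => ⟨hℓq k, hqb (ψ k)⟩⟩
  have hsaddle : IsSaddlePointOn s t a x y := fun x' hx' y' hy' => by
    obtain ⟨ℓ, b, hℓ, hb, hle⟩ := hsqueeze x' hx' y' hy'
    exact le_of_tendsto_of_tendsto' hℓ hb fun k => (hle k).1.trans (hle k).2
  obtain ⟨ℓ, b, hℓ, hb, hle⟩ := hsqueeze x hx y hy
  exact ⟨φ ∘ ψ, x, hx, y, hy, hsaddle,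
    tendsto_of_tendsto_of_tendsto_of_le_of_le hℓ hb (fun k => (hle k).1) fun k => (hle k).2⟩

theorem exists_tendsto_nhdsWithin_saddle_value [FirstCountableTopology E] (he : e ∈ closure S)
    (hU : ∀ u : ℕ → E, (∀ n, u n ∈ S) → Tendsto u atTop (𝓝 e) →
      ∃ φ : ℕ → ℕ, StrictMono φ ∧ ∃ y ∈ t, ∀ x ∈ s,
        ∃ b : ℕ → γ, (∀ k, q (u (φ k)) ≤ b k) ∧ Tendsto b atTop (𝓝 (a x y)))
    (hL : ∀ u : ℕ → E, (∀ n, u n ∈ S) → Tendsto u atTop (𝓝 e) →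
      ∃ φ : ℕ → ℕ, StrictMono φ ∧ ∃ x ∈ s, ∀ y ∈ t,
        ∃ b : ℕ → γ, (∀ k, b k ≤ q (u (φ k))) ∧ Tendsto b atTop (𝓝 (a x y))) :
    ∃ x ∈ s, ∃ y ∈ t, Tendsto q (𝓝[S] e) (𝓝 (a x y)) := by
  obtain ⟨u, hu, hu0⟩ := mem_closure_iff_seq_limit.1 he
  obtain ⟨-, x, hx, y, hy, hsaddle, -⟩ := exists_subseq_tendsto_saddle_value q a s t hU hL hu hu0
  refine ⟨x, hx, y, hy, tendsto_of_subseq_tendsto fun v hv => ?_⟩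
  obtain ⟨hv0, hvS⟩ := tendsto_nhdsWithin_iff.1 hv
  obtain ⟨N, hN⟩ := eventually_atTop.1 hvS
  obtain ⟨φ, x', hx', y', hy', hsaddle', hlim⟩ := exists_subseq_tendsto_saddle_value q a s t hU hL
    (u := fun n => v (n + N)) (fun n => hN _ (Nat.le_add_left N n))
    ((tendsto_add_atTop_iff_nat N).2 hv0)
  refine ⟨fun k => φ k + N, ?_⟩
  rwa [hsaddle.apply_eq hx hy hx' hy' hsaddle']

end Saddle

theorem correa_seeger_min_sup_differentiability_general
    {X Y : Type*}
    (ε : ℝ) (hε : 0 < ε)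
    (G : ℝ → X → Y → ℝ)
    (g h : ℝ → EReal)
    (Xt : ℝ → Set X) (Yt : ℝ → Set Y)
    (hXt : ∀ t, Xt t = {x : X | (⨆ y : Y, (G t x y : EReal)) = g t})
    (hYt : ∀ t, Yt t = {y : Y | (⨅ x : X, (G t x y : EReal)) = h t})
    -- (H1): the set of saddle points S(t) = X(t) × Y(t) is nonempty for 0 ≤ t ≤ ε
    -- (in particular h(t) = g(t) is finite)
    (H1 : ∀ t ∈ Icc 0 ε,
      h t = g t ∧ (Xt t).Nonempty ∧ (Yt t).Nonempty ∧ g t ≠ ⊤ ∧ g t ≠ ⊥)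
    -- (H2): the partial derivative ∂ₜG(t,x,y) exists for all (t,x,y) ∈ [0,ε] × X × Y
    (Gt : ℝ → X → Y → ℝ)
    (H2 : ∀ t ∈ Icc 0 ε, ∀ (x : X) (y : Y),
      HasDerivWithinAt (fun s => G s x y) (Gt t x y) (Icc 0 ε) t)
    -- (H3)
    (H3 : ∀ tn : ℕ → ℝ, (∀ n, tn n ∈ Ioc 0 ε) → Tendsto tn atTop (nhds 0) →
      ∃ φ : ℕ → ℕ, StrictMono φ ∧ ∃ x0 ∈ Xt 0, ∃ xk : ℕ → X,
        (∀ k, xk k ∈ Xt (tn (φ k))) ∧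
        ∀ y ∈ Yt 0, ∀ η > (0 : ℝ), ∃ δ > (0 : ℝ), ∃ N : ℕ,
          ∀ (t : ℝ) (k : ℕ), 0 < t → t < δ → N < k →
            |Gt t (xk k) y - Gt 0 x0 y| < η)
    -- (H4)
    (H4 : ∀ tn : ℕ → ℝ, (∀ n, tn n ∈ Ioc 0 ε) → Tendsto tn atTop (nhds 0) →
      ∃ φ : ℕ → ℕ, StrictMono φ ∧ ∃ y0 ∈ Yt 0, ∃ yk : ℕ → Y,
        (∀ k, yk k ∈ Yt (tn (φ k))) ∧
        ∀ x ∈ Xt 0, ∀ η > (0 : ℝ), ∃ δ > (0 : ℝ), ∃ N : ℕ,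
          ∀ (t : ℝ) (k : ℕ), 0 < t → t < δ → N < k →
            |Gt t x (yk k) - Gt 0 x y0| < η) :
    ∃ x0 ∈ Xt 0, ∃ y0 ∈ Yt 0,
      Tendsto (fun t => ((g t).toReal - (g 0).toReal) / t)
        (nhdsWithin 0 (Ioc 0 ε)) (nhds (Gt 0 x0 y0)) := by
  have hg_coe : ∀ t ∈ Icc 0 ε, ((g t).toReal : EReal) = g t := fun t ht =>
    EReal.coe_toReal (H1 t ht).2.2.2.1 (H1 t ht).2.2.2.2
  have hX : ∀ t ∈ Icc 0 ε, ∀ x ∈ Xt t, ⨆ y, (G t x y : EReal) = (g t).toReal := by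
    intro t ht x hx
    rw [hXt] at hx
    rw [hg_coe t ht, hx]
  have hY : ∀ t ∈ Icc 0 ε, ∀ y ∈ Yt t, ⨅ x, (G t x y : EReal) = (g t).toReal := by
    intro t ht y hy
    rw [hYt] at hy
    rw [hg_coe t ht, hy, (H1 t ht).1]
  have h0 : (0 : ℝ) ∈ Icc 0 ε := left_mem_Icc.2 hε.le
  refine exists_tendsto_nhdsWithin_saddle_value _ (fun x y => Gt 0 x y) (Xt 0) (Yt 0)
    (by rwa [closure_Ioc hε.ne]) (fun u hu hu0 => ?_) fun u hu hu0 => ?_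
  · obtain ⟨φ, hφ, y0, hy0, yk, hyk, hjoint⟩ := H4 u hu hu0
    refine ⟨φ, hφ, y0, hy0, fun x hx => ⟨_, fun k => ?_, tendsto_slope_of_joint_limit
      (fun k s hs => H2 s hs x (yk k)) (hjoint x hx) (fun k => hu (φ k))
      (hu0.comp hφ.tendsto_atTop)⟩⟩
    exact div_le_div_of_nonneg_right (sub_le_sub_of_iSup_eq_of_iInf_eq (hX 0 h0 x hx)
      (hY _ (Ioc_subset_Icc_self (hu _)) _ (hyk k))) (hu _).1.le
  · obtain ⟨φ, hφ, x0, hx0, xk, hxk, hjoint⟩ := H3 u hu hu0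
    refine ⟨φ, hφ, x0, hx0, fun y hy => ⟨_, fun k => ?_, tendsto_slope_of_joint_limit
      (fun k s hs => H2 s hs (xk k) y) (hjoint y hy) (fun k => hu (φ k))
      (hu0.comp hφ.tendsto_atTop)⟩⟩
    have hle := sub_le_sub_of_iSup_eq_of_iInf_eq (hX _ (Ioc_subset_Icc_self (hu _)) _ (hxk k))
      (hY 0 h0 y hy)
    exact div_le_div_of_nonneg_right (by linarith) (hu _).1.le

/-- Correa–Seeger min-sup differentiability theorem (Theorem 8.1): under the
saddle-point assumption (H1), existence of the partial derivative `∂_t G` (H2),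
and the joint-limit continuity assumptions (H3), (H4), there is a saddle point
`(x⁰, y⁰) ∈ X(0) × Y(0)` such that the one-sided derivative of
`g(t) = inf_x sup_y G(t,x,y)` at `t = 0` exists and equals `∂_t G(0, x⁰, y⁰)`. -/
theorem correa_seeger_min_sup_differentiability
    {X Y : Type*}
    [NormedAddCommGroup X] [NormedSpace ℝ X] [CompleteSpace X]
    [NormedAddCommGroup Y] [NormedSpace ℝ Y] [CompleteSpace Y]
    (ε : ℝ) (hε : 0 < ε)
    (G : ℝ → X → Y → ℝ)
    (g h : ℝ → EReal)
    (hg : ∀ t, g t = ⨅ x : X, ⨆ y : Y, (G t x y : EReal))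
    (hh : ∀ t, h t = ⨆ y : Y, ⨅ x : X, (G t x y : EReal))
    (Xt : ℝ → Set X) (Yt : ℝ → Set Y)
    (hXt : ∀ t, Xt t = {x : X | (⨆ y : Y, (G t x y : EReal)) = g t})
    (hYt : ∀ t, Yt t = {y : Y | (⨅ x : X, (G t x y : EReal)) = h t})
    -- (H1): the set of saddle points S(t) = X(t) × Y(t) is nonempty for 0 ≤ t ≤ ε
    -- (in particular h(t) = g(t) is finite)
    (H1 : ∀ t ∈ Icc 0 ε,
      h t = g t ∧ (Xt t).Nonempty ∧ (Yt t).Nonempty ∧ g t ≠ ⊤ ∧ g t ≠ ⊥)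
    -- (H2): the partial derivative ∂ₜG(t,x,y) exists for all (t,x,y) ∈ [0,ε] × X × Y
    (Gt : ℝ → X → Y → ℝ)
    (H2 : ∀ t ∈ Icc 0 ε, ∀ (x : X) (y : Y),
      HasDerivWithinAt (fun s => G s x y) (Gt t x y) (Icc 0 ε) t)
    -- (H3)
    (H3 : ∀ tn : ℕ → ℝ, (∀ n, tn n ∈ Ioc 0 ε) → Tendsto tn atTop (nhds 0) →
      ∃ φ : ℕ → ℕ, StrictMono φ ∧ ∃ x0 ∈ Xt 0, ∃ xk : ℕ → X,
        (∀ k, xk k ∈ Xt (tn (φ k))) ∧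
        ∀ y ∈ Yt 0, ∀ η > (0 : ℝ), ∃ δ > (0 : ℝ), ∃ N : ℕ,
          ∀ (t : ℝ) (k : ℕ), 0 < t → t < δ → N < k →
            |Gt t (xk k) y - Gt 0 x0 y| < η)
    -- (H4)
    (H4 : ∀ tn : ℕ → ℝ, (∀ n, tn n ∈ Ioc 0 ε) → Tendsto tn atTop (nhds 0) →
      ∃ φ : ℕ → ℕ, StrictMono φ ∧ ∃ y0 ∈ Yt 0, ∃ yk : ℕ → Y,
        (∀ k, yk k ∈ Yt (tn (φ k))) ∧
        ∀ x ∈ Xt 0, ∀ η > (0 : ℝ), ∃ δ > (0 : ℝ), ∃ N : ℕ,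
          ∀ (t : ℝ) (k : ℕ), 0 < t → t < δ → N < k →
            |Gt t x (yk k) - Gt 0 x y0| < η) :
    ∃ x0 ∈ Xt 0, ∃ y0 ∈ Yt 0,
      Tendsto (fun t => ((g t).toReal - (g 0).toReal) / t)
        (nhdsWithin 0 (Ioc 0 ε)) (nhds (Gt 0 x0 y0)) :=
  correa_seeger_min_sup_differentiability_general ε hε G g h Xt Yt hXt hYt H1 Gt H2 H3 H4
end
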